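/- arXiv:2402.12931 — 9 statements merged into one kernel-verified Lean document; each statement's English description precedes it below -/
import Mathlib

section
/- For any Epstein model M = ⟨v, R⟩, the set S^M = {⟨v', R'⟩ : v' = v and R \ Ω^M ⊆ R' ⊆ R ∪ Ω^M} has cardinality 2^ℵ₀ (the cardinality of the continuum). -/
/-- Epstein formulas: letters, ¬, ∨, ∧, →, ↔, △ (tri), ↪ (hook). -/
inductive EFor : Type
  | var : ℕ → EFor
  | neg : EFor → EFor
  | or : EFor → EFor → EFor
  | and : EFor → EFor → EFor
  | imp : EFor → EFor → EFor
  | iff : EFor → EFor → EFor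
  | tri : EFor → EFor → EFor
  | hook : EFor → EFor → EFor
  deriving DecidableEq

/-- An Epstein model: a valuation of letters and a binary relation on formulas. -/
structure EModel : Type where
  v : ℕ → Prop
  R : Set (EFor × EFor)

/-- Epstein satisfaction. -/
def sat (M : EModel) : EFor → Prop
  | .var n => M.v n
  | .neg φ => ¬ sat M φ
  | .or φ ψ => sat M φ ∨ sat M ψ
  | .and φ ψ => sat M φ ∧ sat M ψ
  | .imp φ ψ => sat M φ → sat M ψ
  | .iff φ ψ => (sat M φ ↔ sat M ψ)
  | .tri φ ψ => (sat M φ ∧ sat M ψ) ∧ (φ, ψ) ∈ M.R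
  | .hook φ ψ => (sat M φ → sat M ψ) ∧ (φ, ψ) ∈ M.R

/-- The Omega set of a model. -/
def Omega (M : EModel) : Set (EFor × EFor) :=
  {p | ¬ sat M (.imp p.1 p.2)}

/-- The S-set of a model. -/
def Sset (M : EModel) : Set EModel :=
  {N | N.v = M.v ∧ M.R \ Omega M ⊆ N.R ∧ N.R ⊆ M.R ∪ Omega M}

/-- The theory of a model. -/
def Th (M : EModel) : Set EFor := {φ | sat M φ}

/-- Substitution: extend a map on letters homomorphically. -/
def esubst (σ : ℕ → EFor) : EFor → EFor
  | .var n => σ n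
  | .neg φ => .neg (esubst σ φ)
  | .or φ ψ => .or (esubst σ φ) (esubst σ ψ)
  | .and φ ψ => .and (esubst σ φ) (esubst σ ψ)
  | .imp φ ψ => .imp (esubst σ φ) (esubst σ ψ)
  | .iff φ ψ => .iff (esubst σ φ) (esubst σ ψ)
  | .tri φ ψ => .tri (esubst σ φ) (esubst σ ψ)
  | .hook φ ψ => .hook (esubst σ φ) (esubst σ ψ)

/-- A boolean homomorphism: any assignment respecting the boolean connectives
(no constraint on △, ↪, which are treated as atoms). -/
def BoolHom (w : EFor → Prop) : Prop :=
  (∀ φ, w (.neg φ) ↔ ¬ w φ) ∧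
  (∀ φ ψ, w (.or φ ψ) ↔ (w φ ∨ w ψ)) ∧
  (∀ φ ψ, w (.and φ ψ) ↔ (w φ ∧ w ψ)) ∧
  (∀ φ ψ, w (.imp φ ψ) ↔ (w φ → w ψ)) ∧
  (∀ φ ψ, w (.iff φ ψ) ↔ (w φ ↔ w ψ))

/-- Classical tautologies in the language of Epstein logic. -/
def Taut (φ : EFor) : Prop := ∀ w, BoolHom w → w φ

/-- The logic FΛ: least set containing CPL, the two Epstein axioms and Λ,
closed under uniform substitution and modus ponens. -/
inductive FLam (Λ : Set EFor) : EFor → Prop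
  | taut {φ} : Taut φ → FLam Λ φ
  | ax1 : FLam Λ (.imp (.hook (.var 0) (.var 1)) (.imp (.var 0) (.var 1)))
  | ax2 : FLam Λ (.iff (.tri (.var 0) (.var 1))
      (.and (.hook (.var 0) (.var 1)) (.and (.var 0) (.var 1))))
  | extra {φ} : φ ∈ Λ → FLam Λ φ
  | subst {φ} (σ : ℕ → EFor) : FLam Λ φ → FLam Λ (esubst σ φ)
  | mp {φ ψ} : FLam Λ (.imp φ ψ) → FLam Λ φ → FLam Λ ψ

/-- The base logic F. -/
def Fmem : EFor → Prop := FLam ∅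

/-- Hilbert derivability from premises Γ over a logic L. -/
inductive Deriv (L : EFor → Prop) (Γ : Set EFor) : EFor → Prop
  | thm {φ} : L φ → Deriv L Γ φ
  | prem {φ} : φ ∈ Γ → Deriv L Γ φ
  | mp {φ ψ} : Deriv L Γ (.imp φ ψ) → Deriv L Γ φ → Deriv L Γ ψ

/-- Validity on a relation: true in all models built over it. -/
def relSat (R : Set (EFor × EFor)) (φ : EFor) : Prop :=
  ∀ v : ℕ → Prop, sat ⟨v, R⟩ φ

def etop : EFor := .or (.var 0) (.neg (.var 0))
def ebot : EFor := .neg etop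

/-! Since the valuation is fixed, a member of `Sset M` is determined by its relation, which may be
any set between `M.R \ Omega M` and `M.R ∪ Omega M`; such sets correspond to subsets of `Omega M`.
Formulas are countable and `Omega M` contains every pair `(p ∨ ¬p, ⊥)`, so `Omega M` is countably
infinite and has `2 ^ ℵ₀` subsets. -/

def EFor.encode : EFor → ℕ
  | .var n => Nat.pair 0 n
  | .neg φ => Nat.pair 1 φ.encode
  | .or φ ψ => Nat.pair 2 (Nat.pair φ.encode ψ.encode)
  | .and φ ψ => Nat.pair 3 (Nat.pair φ.encode ψ.encode)
  | .imp φ ψ => Nat.pair 4 (Nat.pair φ.encode ψ.encode)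
  | .iff φ ψ => Nat.pair 5 (Nat.pair φ.encode ψ.encode)
  | .tri φ ψ => Nat.pair 6 (Nat.pair φ.encode ψ.encode)
  | .hook φ ψ => Nat.pair 7 (Nat.pair φ.encode ψ.encode)

theorem EFor.encode_injective : Function.Injective EFor.encode := by
  intro φ₁ φ₂ h
  induction φ₁ generalizing φ₂ <;> cases φ₂ <;>
    simp_all [EFor.encode, Nat.pair_eq_pair] <;> grind

instance : Countable EFor := EFor.encode_injective.countable

def Set.iccSdiffUnionEquiv {α : Type*} (s t : Set α) : Set.Icc (s \ t) (s ∪ t) ≃ Set t where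
  toFun u := Subtype.val ⁻¹' u.1
  invFun w := ⟨s \ t ∪ Subtype.val '' w, Set.subset_union_left,
    Set.union_subset (Set.sdiff_subset.trans Set.subset_union_left)
      ((Set.image_subset_range _ _).trans (by simp))⟩
  left_inv := by
    rintro ⟨u, hsu, hut⟩
    refine Subtype.ext (Set.ext fun x => ?_)
    by_cases hx : x ∈ t
    · simp [hx]
    · have hsu_iff : x ∈ s ↔ x ∈ u :=
        ⟨fun hs => hsu ⟨hs, hx⟩, fun hu => (hut hu).resolve_right hx⟩
      simpa [hx] using hsu_iff
  right_inv w := by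
    ext x
    simp

def Sset.equivIcc (M : EModel) : Sset M ≃ Set.Icc (M.R \ Omega M) (M.R ∪ Omega M) where
  toFun N := ⟨N.1.R, N.2.2⟩
  invFun R := ⟨⟨M.v, R⟩, rfl, R.2⟩
  left_inv := by
    rintro ⟨⟨v, R⟩, hv, -⟩
    apply Subtype.ext
    dsimp only at hv ⊢
    rw [hv]
  right_inv _ := rfl

theorem mem_Omega {M : EModel} {p : EFor × EFor} : p ∈ Omega M ↔ sat M p.1 ∧ ¬ sat M p.2 := by
  simp [Omega, sat]

theorem Omega_infinite (M : EModel) : (Omega M).Infinite := by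
  refine Set.infinite_of_injective_forall_mem
    (f := fun n => (EFor.or (.var n) (.neg (.var n)), ebot)) (fun m n h => by simpa using h)
    fun n => mem_Omega.2 ?_
  simp only [sat, ebot, etop]
  tauto

theorem mk_Omega (M : EModel) : Cardinal.mk (Omega M) = Cardinal.aleph0 :=
  have := (Omega_infinite M).to_subtype
  Cardinal.mk_eq_aleph0 _

/-- the S-set has cardinality 2^ℵ₀. -/
theorem stmt1 (M : EModel) : Cardinal.mk (↥(Sset M)) = 2 ^ Cardinal.aleph0 := by
  rw [Cardinal.mk_congr ((Sset.equivIcc M).trans (Set.iccSdiffUnionEquiv _ _)), Cardinal.mk_set,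
    mk_Omega]
end

section
/- For Epstein models M = ⟨v, R⟩ and N = ⟨v', R'⟩: N ∈ S^M if and only if Th(M) = Th(N), where Th(M) = {φ : M ⊨ φ}. Hence S^M equals the equivalence class of M under theoretical equivalence. -/
/-! A model in `S^M` keeps the valuation of `M` and may change `R` only on the pairs of `Ω^M`,
i.e. those `(φ, ψ)` with `M ⊨ φ` and `M ⊭ ψ`. Such pairs can occur in `R` only through `φ △ ψ`
or `φ ↪ ψ`, and both of those are false in `M` regardless of `R`. Conversely, the letters pin down
the valuation and `φ ↪ ψ` detects membership of `(φ, ψ)` in `R` whenever `M ⊨ φ → ψ`. -/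

namespace EModel

variable {M N : EModel}

theorem notMem_Omega_iff {p : EFor × EFor} : p ∉ Omega M ↔ (sat M p.1 → sat M p.2) :=
  not_not

theorem mem_Sset_iff : N ∈ Sset M ↔
    N.v = M.v ∧ ∀ φ ψ, (sat M φ → sat M ψ) → ((φ, ψ) ∈ N.R ↔ (φ, ψ) ∈ M.R) := by
  simp only [Sset, Set.mem_ofPred_eq, Set.subset_def, Set.mem_sdiff, Set.mem_union, Prod.forall]
  refine and_congr_right fun _ => ⟨fun ⟨h₁, h₂⟩ φ ψ himp => ?_, fun h => ⟨?_, ?_⟩⟩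
  · have hΩ : (φ, ψ) ∉ Omega M := notMem_Omega_iff.mpr himp
    exact ⟨fun hN => (h₂ φ ψ hN).resolve_right hΩ, fun hM => h₁ φ ψ ⟨hM, hΩ⟩⟩
  · rintro φ ψ ⟨hM, hΩ⟩
    exact (h φ ψ (notMem_Omega_iff.mp hΩ)).mpr hM
  · intro φ ψ hN
    by_cases hΩ : (φ, ψ) ∈ Omega M
    · exact Or.inr hΩ
    · exact Or.inl ((h φ ψ (notMem_Omega_iff.mp hΩ)).mp hN)

theorem sat_congr (hv : N.v = M.v)
    (hR : ∀ φ ψ, (sat M φ → sat M ψ) → ((φ, ψ) ∈ N.R ↔ (φ, ψ) ∈ M.R)) (φ : EFor) :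
    sat N φ ↔ sat M φ := by
  induction φ with
  | var n => simp only [sat, hv]
  | neg φ ih => simp only [sat, ih]
  | or φ ψ ih₁ ih₂ => simp only [sat, ih₁, ih₂]
  | and φ ψ ih₁ ih₂ => simp only [sat, ih₁, ih₂]
  | imp φ ψ ih₁ ih₂ => simp only [sat, ih₁, ih₂]
  | iff φ ψ ih₁ ih₂ => simp only [sat, ih₁, ih₂]
  | tri φ ψ ih₁ ih₂ =>
    simp only [sat, ih₁, ih₂]
    exact and_congr_right fun h => hR φ ψ fun _ => h.2
  | hook φ ψ ih₁ ih₂ =>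
    simp only [sat, ih₁, ih₂]
    exact and_congr_right (hR φ ψ)

theorem v_eq_of_sat_iff (h : ∀ φ, sat N φ ↔ sat M φ) : N.v = M.v :=
  funext fun n => propext (h (.var n))

theorem mem_R_iff_of_sat_iff (h : ∀ φ, sat N φ ↔ sat M φ) {φ ψ : EFor}
    (himp : sat M φ → sat M ψ) : (φ, ψ) ∈ N.R ↔ (φ, ψ) ∈ M.R := by
  have hhook := h (.hook φ ψ)
  simp only [sat, h φ, h ψ] at hhook
  exact and_congr_right_iff.mp hhook himp

theorem Th_eq_Th_iff : Th M = Th N ↔ ∀ φ, sat N φ ↔ sat M φ := by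
  simp only [Th, Set.ext_iff, Set.mem_ofPred_eq, iff_comm]

end EModel

/-- N ∈ S^M iff Th(M) = Th(N); hence S^M is the equivalence class of M. -/
theorem stmt3 (M N : EModel) : N ∈ Sset M ↔ Th M = Th N := by
  rw [EModel.mem_Sset_iff, EModel.Th_eq_Th_iff]
  exact ⟨fun ⟨hv, hR⟩ => EModel.sat_congr hv hR,
    fun h => ⟨EModel.v_eq_of_sat_iff h, fun _ _ => EModel.mem_R_iff_of_sat_iff h⟩⟩
end

section
/- Every Epstein model has uncountably many (exactly 2^ℵ₀ many) theoretically equivalent Epstein models, i.e. models with the same theory. -/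
namespace Stmt4Aux

/-- Encoding of formulas into ℕ. -/
def enc : EFor → ℕ
  | .var n => Nat.pair 0 n
  | .neg φ => Nat.pair 1 (enc φ)
  | .or φ ψ => Nat.pair 2 (Nat.pair (enc φ) (enc ψ))
  | .and φ ψ => Nat.pair 3 (Nat.pair (enc φ) (enc ψ))
  | .imp φ ψ => Nat.pair 4 (Nat.pair (enc φ) (enc ψ))
  | .iff φ ψ => Nat.pair 5 (Nat.pair (enc φ) (enc ψ))
  | .tri φ ψ => Nat.pair 6 (Nat.pair (enc φ) (enc ψ))
  | .hook φ ψ => Nat.pair 7 (Nat.pair (enc φ) (enc ψ))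

lemma enc_eq {φ ψ : EFor} (h : enc φ = enc ψ) : φ = ψ := by
  induction φ generalizing ψ with
  | var n => cases ψ <;> simp [enc, Nat.pair_eq_pair] at h; rw [h]
  | neg φ ih => cases ψ <;> simp [enc, Nat.pair_eq_pair] at h; rw [ih h]
  | or φ₁ φ₂ ih1 ih2 =>
      cases ψ <;> simp [enc, Nat.pair_eq_pair] at h; rw [ih1 h.1, ih2 h.2]
  | and φ₁ φ₂ ih1 ih2 =>
      cases ψ <;> simp [enc, Nat.pair_eq_pair] at h; rw [ih1 h.1, ih2 h.2]
  | imp φ₁ φ₂ ih1 ih2 =>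
      cases ψ <;> simp [enc, Nat.pair_eq_pair] at h; rw [ih1 h.1, ih2 h.2]
  | iff φ₁ φ₂ ih1 ih2 =>
      cases ψ <;> simp [enc, Nat.pair_eq_pair] at h; rw [ih1 h.1, ih2 h.2]
  | tri φ₁ φ₂ ih1 ih2 =>
      cases ψ <;> simp [enc, Nat.pair_eq_pair] at h; rw [ih1 h.1, ih2 h.2]
  | hook φ₁ φ₂ ih1 ih2 =>
      cases ψ <;> simp [enc, Nat.pair_eq_pair] at h; rw [ih1 h.1, ih2 h.2]

lemma enc_inj : Function.Injective enc := fun _ _ h => enc_eq h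

instance : Countable EFor := ⟨⟨enc, enc_inj⟩⟩

/-- Any model agreeing with M on v and with R perturbed only inside Ω has the same
satisfaction relation. -/
lemma sat_congr (M N : EModel) (hv : N.v = M.v)
    (h1 : M.R \ Omega M ⊆ N.R) (h2 : N.R ⊆ M.R ∪ Omega M) :
    ∀ φ, sat N φ ↔ sat M φ := by
  intro φ
  induction φ with
  | var n => simp [sat, hv]
  | neg φ ih => simp [sat, ih]
  | or φ ψ ih1 ih2 => simp [sat, ih1, ih2]
  | and φ ψ ih1 ih2 => simp [sat, ih1, ih2]
  | imp φ ψ ih1 ih2 => simp [sat, ih1, ih2]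
  | iff φ ψ ih1 ih2 => simp [sat, ih1, ih2]
  | tri φ ψ ih1 ih2 =>
      simp only [sat, ih1, ih2]
      constructor
      · rintro ⟨⟨ha, hb⟩, hR⟩
        refine ⟨⟨ha, hb⟩, ?_⟩
        rcases h2 hR with h | h
        · exact h
        · exact absurd (fun _ => hb) h
      · rintro ⟨⟨ha, hb⟩, hR⟩
        exact ⟨⟨ha, hb⟩, h1 ⟨hR, fun hc => hc (fun _ => hb)⟩⟩
  | hook φ ψ ih1 ih2 =>
      simp only [sat, ih1, ih2]
      constructor
      · rintro ⟨ha, hR⟩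
        refine ⟨ha, ?_⟩
        rcases h2 hR with h | h
        · exact h
        · exact absurd ha h
      · rintro ⟨ha, hR⟩
        exact ⟨ha, h1 ⟨hR, fun hc => hc ha⟩⟩

def topf (n : ℕ) : EFor := .or (.var n) (.neg (.var n))

lemma pair_mem_Omega (M : EModel) (n : ℕ) : (topf n, ebot) ∈ Omega M := by
  intro h
  simp only [sat, topf, ebot, etop] at h
  exact (h (by tauto)) (by tauto)

/-- The family of models indexed by sets of naturals. -/
def NS (M : EModel) (S : Set ℕ) : EModel :=
  ⟨M.v, (M.R \ Omega M) ∪ {p | ∃ n ∈ S, p = (topf n, ebot)}⟩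

lemma NS_Th (M : EModel) (S : Set ℕ) : Th (NS M S) = Th M := by
  have h := sat_congr M (NS M S) rfl
    (fun p hp => Or.inl hp)
    (by
      rintro p (hp | ⟨n, _, rfl⟩)
      · exact Or.inl hp.1
      · exact Or.inr (pair_mem_Omega M n))
  ext φ
  exact h φ

lemma NS_inj (M : EModel) : Function.Injective (NS M) := by
  intro S T h
  have hR : (NS M S).R = (NS M T).R := by rw [h]
  ext n
  have hmem : ∀ U : Set ℕ, (topf n, ebot) ∈ (NS M U).R ↔ n ∈ U := by
    intro U
    constructor
    · rintro (hp | ⟨m, hm, hpe⟩)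
      · exact absurd (pair_mem_Omega M n) hp.2
      · have : topf n = topf m := congrArg Prod.fst hpe
        have : n = m := by simpa [topf] using this
        rwa [this]
    · intro hn; exact Or.inr ⟨n, hn, rfl⟩
  rw [← hmem S, ← hmem T, hR]

end Stmt4Aux

/-- every Epstein model has exactly 2^ℵ₀ theoretically equivalent models. -/
theorem stmt4 (M : EModel) :
    Cardinal.mk (↥{N : EModel | Th N = Th M}) = 2 ^ Cardinal.aleph0 := by
  apply le_antisymm
  · -- upper bound: there are at most 2^ℵ₀ models at all
    have hinj : Function.Injective (fun N : EModel => (N.v, N.R)) := by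
      intro ⟨v1, R1⟩ ⟨v2, R2⟩ h
      simp_all
    calc Cardinal.mk (↥{N : EModel | Th N = Th M})
        ≤ Cardinal.mk EModel := Cardinal.mk_subtype_le _
      _ ≤ Cardinal.mk ((ℕ → Prop) × Set (EFor × EFor)) :=
          Cardinal.mk_le_of_injective hinj
      _ ≤ 2 ^ Cardinal.aleph0 := by
          rw [Cardinal.mk_prod]
          have h1 : Cardinal.mk (ℕ → Prop) = 2 ^ Cardinal.aleph0 := by
            rw [Cardinal.mk_arrow]
            simp [Cardinal.mk_Prop]
          have h2 : Cardinal.mk (Set (EFor × EFor)) ≤ 2 ^ Cardinal.aleph0 := by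
            rw [Cardinal.mk_set]
            exact Cardinal.power_le_power_left (by norm_num) Cardinal.mk_le_aleph0
          rw [Cardinal.lift_id, Cardinal.lift_id, h1]
          calc (2 ^ Cardinal.aleph0) * Cardinal.mk (Set (EFor × EFor))
              ≤ (2 ^ Cardinal.aleph0) * (2 ^ Cardinal.aleph0) :=
                mul_le_mul_right h2 _
            _ = 2 ^ Cardinal.aleph0 := by
                rw [← Cardinal.power_add]
                simp
  · -- lower bound
    have : ∀ S : Set ℕ, Stmt4Aux.NS M S ∈ {N : EModel | Th N = Th M} := by
      intro S; exact Stmt4Aux.NS_Th M S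
    have hinj : Function.Injective
        (fun S : Set ℕ => (⟨Stmt4Aux.NS M S, this S⟩ : ↥{N : EModel | Th N = Th M})) := by
      intro S T h
      exact Stmt4Aux.NS_inj M (by simpa using congrArg Subtype.val h)
    have := Cardinal.mk_le_of_injective hinj
    simp [Cardinal.mk_set] at this
    exact this
end

section
/- A classical formula A over the extended atom set is equivalent (valid over all Epstein models viewed as classical models) to the standard translation St(φ) of some Epstein formula φ if and only if A is S-set invariant, i.e. whenever M ⊨_CPL A and N ∈ S^M then N ⊨_CPL A. -/
/-- Classical propositional formulas over the extended atom set
Φ ∪ {p_(φ,ψ) : φ,ψ ∈ FOR}. -/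
inductive CFor : Type
  | atom : ℕ ⊕ (EFor × EFor) → CFor
  | neg : CFor → CFor
  | or : CFor → CFor → CFor
  | and : CFor → CFor → CFor
  | imp : CFor → CFor → CFor
  | iff : CFor → CFor → CFor

/-- An Epstein model viewed as a classical model over the extended atoms. -/
def csat (M : EModel) : CFor → Prop
  | .atom (.inl n) => M.v n
  | .atom (.inr p) => p ∈ M.R
  | .neg A => ¬ csat M A
  | .or A B => csat M A ∨ csat M B
  | .and A B => csat M A ∧ csat M B
  | .imp A B => csat M A → csat M B
  | .iff A B => (csat M A ↔ csat M B)

/-- The standard translation of Epstein formulas into CPL. -/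
def St : EFor → CFor
  | .var n => .atom (.inl n)
  | .neg φ => .neg (St φ)
  | .or φ ψ => .or (St φ) (St ψ)
  | .and φ ψ => .and (St φ) (St ψ)
  | .imp φ ψ => .imp (St φ) (St ψ)
  | .iff φ ψ => .iff (St φ) (St ψ)
  | .hook φ ψ => .and (.imp (St φ) (St ψ)) (.atom (.inr (φ, ψ)))
  | .tri φ ψ => .and (.and (St φ) (St ψ)) (.atom (.inr (φ, ψ)))

/-- A CPL formula is S-set invariant iff its truth is preserved within S-sets. -/
def SsetInvariant (A : CFor) : Prop :=
  ∀ M N : EModel, csat M A → N ∈ Sset M → csat N A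

/-!
Epstein satisfaction consults `R` only at pairs outside `Ω^M`, and an S-set fixes the valuation
and `R \ Ω^M`, so all models in an S-set satisfy the same Epstein formulas; hence so do the
translations `St φ`. Conversely, every S-set contains the saturated model `⟨v, R ∪ Ω^M⟩`, in
which the atom `p_(φ,ψ)` is equivalent to `(φ ↪ ψ) ∨ ¬(φ → ψ)`. Replacing each atom of an
S-set invariant `A` this way gives an Epstein formula agreeing with `A` on saturated models,
and invariance transfers the agreement to every model.
-/

section Sset

variable {M N : EModel}

lemma mem_R_iff_of_mem_Sset (h : N ∈ Sset M) {p : EFor × EFor} (hp : p ∉ Omega M) :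
    p ∈ N.R ↔ p ∈ M.R :=
  ⟨fun hN => (h.2.2 hN).resolve_right hp, fun hM => h.2.1 ⟨hM, hp⟩⟩

lemma sat_iff_of_mem_Sset (h : N ∈ Sset M) (φ : EFor) : sat M φ ↔ sat N φ := by
  induction φ with
  | var n => simp only [sat, h.1]
  | neg φ ih => simp only [sat, ih]
  | or φ ψ ih₁ ih₂ => simp only [sat, ih₁, ih₂]
  | and φ ψ ih₁ ih₂ => simp only [sat, ih₁, ih₂]
  | imp φ ψ ih₁ ih₂ => simp only [sat, ih₁, ih₂]
  | iff φ ψ ih₁ ih₂ => simp only [sat, ih₁, ih₂]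
  | tri φ ψ ih₁ ih₂ =>
    simp only [sat, ← ih₁, ← ih₂]
    exact and_congr_right fun hφψ =>
      (mem_R_iff_of_mem_Sset h (p := (φ, ψ)) fun hΩ => hΩ fun _ => hφψ.2).symm
  | hook φ ψ ih₁ ih₂ =>
    simp only [sat, ← ih₁, ← ih₂]
    exact and_congr_right fun himp =>
      (mem_R_iff_of_mem_Sset h (p := (φ, ψ)) fun hΩ => hΩ himp).symm

lemma Omega_eq_of_mem_Sset (h : N ∈ Sset M) : Omega N = Omega M := by
  ext p
  exact not_congr (sat_iff_of_mem_Sset h (.imp p.1 p.2)).symm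

lemma mem_Sset_symm (h : N ∈ Sset M) : M ∈ Sset N := by
  refine ⟨h.1.symm, fun p hp => ?_, fun p hp => ?_⟩
  · rw [Omega_eq_of_mem_Sset h] at hp
    exact (mem_R_iff_of_mem_Sset h hp.2).1 hp.1
  · rw [Omega_eq_of_mem_Sset h]
    by_cases hΩ : p ∈ Omega M
    · exact Or.inr hΩ
    · exact Or.inl ((mem_R_iff_of_mem_Sset h hΩ).2 hp)

lemma SsetInvariant.csat_iff {A : CFor} (hA : SsetInvariant A) (h : N ∈ Sset M) :
    csat M A ↔ csat N A :=
  ⟨fun hM => hA M N hM h, fun hN => hA N M hN (mem_Sset_symm h)⟩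

def saturate (M : EModel) : EModel := ⟨M.v, M.R ∪ Omega M⟩

lemma saturate_mem_Sset (M : EModel) : saturate M ∈ Sset M :=
  ⟨rfl, fun _ hp => Or.inl hp.1, subset_rfl⟩

lemma Omega_saturate_subset (M : EModel) : Omega (saturate M) ⊆ (saturate M).R := by
  rw [Omega_eq_of_mem_Sset (saturate_mem_Sset M)]
  exact Set.subset_union_right

end Sset

lemma csat_St (M : EModel) (φ : EFor) : csat M (St φ) ↔ sat M φ := by
  induction φ with
  | var n => rfl
  | neg φ ih => simp only [St, csat, sat, ih]
  | or φ ψ ih₁ ih₂ => simp only [St, csat, sat, ih₁, ih₂]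
  | and φ ψ ih₁ ih₂ => simp only [St, csat, sat, ih₁, ih₂]
  | imp φ ψ ih₁ ih₂ => simp only [St, csat, sat, ih₁, ih₂]
  | iff φ ψ ih₁ ih₂ => simp only [St, csat, sat, ih₁, ih₂]
  | tri φ ψ ih₁ ih₂ => simp only [St, csat, sat, ih₁, ih₂]
  | hook φ ψ ih₁ ih₂ => simp only [St, csat, sat, ih₁, ih₂]

def CFor.toEFor : CFor → EFor
  | .atom (.inl n) => .var n
  | .atom (.inr p) => .or (.hook p.1 p.2) (.neg (.imp p.1 p.2))
  | .neg A => .neg A.toEFor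
  | .or A B => .or A.toEFor B.toEFor
  | .and A B => .and A.toEFor B.toEFor
  | .imp A B => .imp A.toEFor B.toEFor
  | .iff A B => .iff A.toEFor B.toEFor

lemma csat_iff_sat_toEFor {M : EModel} (hM : Omega M ⊆ M.R) (A : CFor) :
    csat M A ↔ sat M A.toEFor := by
  induction A with
  | atom a =>
    rcases a with n | p
    · rfl
    · simp only [CFor.toEFor, csat, sat]
      by_cases himp : sat M p.1 → sat M p.2
      · exact ⟨fun hp => Or.inl ⟨himp, hp⟩, fun h => h.elim And.right (absurd himp)⟩
      · exact ⟨fun _ => Or.inr himp, fun _ => hM himp⟩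
  | neg A ih => simp only [CFor.toEFor, csat, sat, ih]
  | or A B ih₁ ih₂ => simp only [CFor.toEFor, csat, sat, ih₁, ih₂]
  | and A B ih₁ ih₂ => simp only [CFor.toEFor, csat, sat, ih₁, ih₂]
  | imp A B ih₁ ih₂ => simp only [CFor.toEFor, csat, sat, ih₁, ih₂]
  | iff A B ih₁ ih₂ => simp only [CFor.toEFor, csat, sat, ih₁, ih₂]

/-- A is equivalent to the standard translation of some Epstein
formula iff A is S-set invariant. -/
theorem stmt6 (A : CFor) :
    (∃ φ : EFor, ∀ M : EModel, csat M A ↔ csat M (St φ)) ↔ SsetInvariant A := by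
  constructor
  · rintro ⟨φ, hφ⟩ M N hM hN
    rw [hφ, csat_St] at hM ⊢
    exact (sat_iff_of_mem_Sset hN φ).1 hM
  · intro hA
    refine ⟨A.toEFor, fun M => ?_⟩
    have hsat := saturate_mem_Sset M
    calc csat M A ↔ csat (saturate M) A := hA.csat_iff hsat
      _ ↔ sat (saturate M) A.toEFor := csat_iff_sat_toEFor (Omega_saturate_subset M) A
      _ ↔ sat M A.toEFor := (sat_iff_of_mem_Sset hsat _).symm
      _ ↔ csat M (St A.toEFor) := (csat_St M _).symm
end

section
/- For any formulas φ^k defined by φ^0 = φ and φ^{k+1} = φ → φ^k, and any Epstein relation R with (φ, φ^n) ∉ R for some n ≥ 1: for every k ≥ 1 with k ≠ n, R ⊨ σ(p ↪ p^k) for all substitutions σ with σ(p)=φ, where R = (FOR × FOR) \ {(p, p^n)}. Consequently, for distinct nonempty T, V ⊆ ω\{0}, the logics FK_T and FK_V are distinct, where K_T = {p ↪ p^k : k ∈ T}; hence there are 2^ℵ₀ distinct extensions of F of this form. -/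
/-- p^0 := p, p^{k+1} := p → p^k. -/
def pTow : ℕ → EFor
  | 0 => .var 0
  | k + 1 => .imp (.var 0) (pTow k)

/-- The tower φ^k: φ^0 := φ, φ^{k+1} := φ → φ^k. -/
def phiTow (φ : EFor) : ℕ → EFor
  | 0 => φ
  | k + 1 => .imp φ (phiTow φ k)

/-- K_T = {p ↪ p^k : k ∈ T}. -/
def Kset (T : Set ℕ) : Set EFor := {χ | ∃ k ∈ T, χ = .hook (.var 0) (pTow k)}

def FLamSet (Λ : Set EFor) : Set EFor := {φ | FLam Λ φ}

/-!
Write `Rₙ` for `FOR² \ {(p, pⁿ)}`. On `Rₙ` every instance `φ ↪ φᵏ` with `k ≠ n` holds: its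
implication is trivially true, and the pair `(φ, φᵏ)` could only be `(p, pⁿ)` if `φ = p` and
`k = n`, since `k ↦ pᵏ` is injective. Everything derivable in `FΛ` is valid on `Rₙ` under all
substitutions as soon as the members of `Λ` are, so `p ↪ pⁿ ∉ FK_V` whenever `n ∉ V`, while
`p ↪ pⁿ ∈ FK_T` for `n ∈ T`. Hence `T ↦ FK_T` is injective, and there are as many logics `FK_T`
as nonempty sets `T ⊆ ω \ {0}`, namely `2^ℵ₀`.
-/

open Cardinal

theorem sat_boolHom (M : EModel) : BoolHom (sat M) := by
  refine ⟨?_, ?_, ?_, ?_, ?_⟩ <;> intros <;> simp [sat]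

theorem BoolHom.comp_esubst {w : EFor → Prop} (hw : BoolHom w) (σ : ℕ → EFor) :
    BoolHom (fun φ => w (esubst σ φ)) := by
  obtain ⟨hneg, hor, hand, himp, hiff⟩ := hw
  refine ⟨?_, ?_, ?_, ?_, ?_⟩ <;> intros <;> simp [esubst, hneg, hor, hand, himp, hiff]

theorem Taut.esubst {φ : EFor} (h : Taut φ) (σ : ℕ → EFor) : Taut (esubst σ φ) :=
  fun _ hw => h _ (hw.comp_esubst σ)

theorem esubst_esubst (σ τ : ℕ → EFor) (φ : EFor) :
    esubst σ (esubst τ φ) = esubst (fun n => esubst σ (τ n)) φ := by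
  induction φ <;> simp [esubst, *]

theorem esubst_var (φ : EFor) : esubst EFor.var φ = φ := by
  induction φ <;> simp [esubst, *]

theorem esubst_pTow (σ : ℕ → EFor) (k : ℕ) : esubst σ (pTow k) = phiTow (σ 0) k := by
  induction k <;> simp [pTow, phiTow, esubst, *]

theorem phiTow_var_zero (k : ℕ) : phiTow (.var 0) k = pTow k := by
  induction k <;> simp [pTow, phiTow, *]

theorem pTow_injective : Function.Injective pTow := by
  intro m
  induction m with
  | zero => rintro (_ | n) h <;> simp_all [pTow]
  | succ m ih =>
    rintro (_ | n) h
    · simp [pTow] at h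
    · simp only [pTow, EFor.imp.injEq, true_and] at h
      exact congrArg (· + 1) (ih h)

theorem sat_phiTow {M : EModel} {φ : EFor} (h : sat M φ) : ∀ k, sat M (phiTow φ k)
  | 0 => h
  | _ + 1 => fun _ => sat_phiTow h _

theorem relSat_hook_phiTow {n k : ℕ} (hkn : k ≠ n) (φ : EFor) :
    relSat (Set.univ \ {(EFor.var 0, pTow n)}) (.hook φ (phiTow φ k)) := by
  refine fun v => ⟨fun h => sat_phiTow h k, Set.mem_sdiff_of_mem trivial fun hpair => ?_⟩
  simp only [Set.mem_singleton_iff, Prod.mk.injEq] at hpair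
  obtain ⟨rfl, htow⟩ := hpair
  exact hkn (pTow_injective (by rwa [phiTow_var_zero] at htow))

theorem FLam.relSat_esubst {Λ : Set EFor} {R : Set (EFor × EFor)}
    (hΛ : ∀ φ ∈ Λ, ∀ σ, relSat R (esubst σ φ)) {φ : EFor} (h : FLam Λ φ) :
    ∀ σ, relSat R (esubst σ φ) := by
  induction h with
  | taut ht => exact fun σ v => ht.esubst σ _ (sat_boolHom _)
  | ax1 => intro σ v; simp only [esubst, sat]; tauto
  | ax2 => intro σ v; simp only [esubst, sat]; tauto
  | extra hφ => exact hΛ _ hφ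
  | subst τ _ ih => intro σ; rw [esubst_esubst]; exact ih _
  | mp _ _ ih₁ ih₂ => exact fun σ v => ih₁ σ v (ih₂ σ v)

theorem hook_pTow_not_mem_FLamSet {V : Set ℕ} {n : ℕ} (hn : n ∉ V) :
    EFor.hook (.var 0) (pTow n) ∉ FLamSet (Kset V) := by
  intro h
  have hKset : ∀ φ ∈ Kset V, ∀ σ,
      relSat (Set.univ \ {(EFor.var 0, pTow n)}) (esubst σ φ) := by
    rintro _ ⟨k, hk, rfl⟩ σ
    simpa only [esubst, esubst_pTow] using relSat_hook_phiTow (ne_of_mem_of_not_mem hk hn) (σ 0)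
  have hvalid := FLam.relSat_esubst hKset h EFor.var (fun _ => True)
  rw [esubst_var] at hvalid
  exact hvalid.2.2 rfl

theorem hook_pTow_mem_FLamSet {T : Set ℕ} {n : ℕ} (hn : n ∈ T) :
    EFor.hook (.var 0) (pTow n) ∈ FLamSet (Kset T) :=
  FLam.extra ⟨n, hn, rfl⟩

theorem FLamSet_Kset_injective : Function.Injective (fun T => FLamSet (Kset T)) := by
  intro T V (hTV : FLamSet (Kset T) = FLamSet (Kset V))
  by_contra hne
  obtain ⟨n, hn⟩ := Set.symmDiff_nonempty.mpr hne
  rcases Set.mem_symmDiff.mp hn with ⟨hnT, hnV⟩ | ⟨hnV, hnT⟩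
  · exact hook_pTow_not_mem_FLamSet hnV (hTV ▸ hook_pTow_mem_FLamSet hnT)
  · exact hook_pTow_not_mem_FLamSet hnT (hTV ▸ hook_pTow_mem_FLamSet hnV)

theorem mk_setOf_nonempty_and_zero_not_mem :
    #{T : Set ℕ | T.Nonempty ∧ 0 ∉ T} = 2 ^ ℵ₀ := by
  refine le_antisymm ?_ ?_
  · calc #{T : Set ℕ | T.Nonempty ∧ 0 ∉ T} ≤ #(Set ℕ) := mk_subtype_le _
      _ = 2 ^ ℵ₀ := by rw [mk_set, mk_nat]
  · -- `S ↦ {1} ∪ (S + 2)` lands in the nonempty sets avoiding `0`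
    have hshift : ∀ (S : Set ℕ) (n : ℕ), n + 2 ∈ insert 1 ((· + 2) '' S) ↔ n ∈ S := fun S n => by
      simp [(add_left_injective 2).mem_set_image]
    calc (2 : Cardinal) ^ ℵ₀ = #(Set ℕ) := by rw [mk_set, mk_nat]
      _ ≤ #{T : Set ℕ | T.Nonempty ∧ 0 ∉ T} := by
        refine mk_le_of_injective (f := fun S => ⟨insert 1 ((· + 2) '' S), ⟨1, .inl rfl⟩, ?_⟩) ?_
        · simp
        · intro S S' h
          ext n
          rw [← hshift S, ← hshift S', Subtype.mk.inj h]

/-- the model-theoretic fact about R = FOR² \ {(p, p^n)}, the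
distinctness of the logics FK_T, and the count 2^ℵ₀ of such extensions of F. -/
theorem stmt9 :
    (∀ (φ : EFor) (n : ℕ), 1 ≤ n →
      ∀ k, 1 ≤ k → k ≠ n → ∀ σ : ℕ → EFor, σ 0 = φ →
        relSat (Set.univ \ {(EFor.var 0, pTow n)}) (esubst σ (.hook (.var 0) (pTow k)))) ∧
    (∀ T V : Set ℕ, T.Nonempty → V.Nonempty → 0 ∉ T → 0 ∉ V → T ≠ V →
      FLamSet (Kset T) ≠ FLamSet (Kset V)) ∧
    Cardinal.mk (↥{L : Set EFor | ∃ T : Set ℕ, T.Nonempty ∧ 0 ∉ T ∧ L = FLamSet (Kset T)})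
      = 2 ^ Cardinal.aleph0 := by
  refine ⟨fun φ n _ k _ hkn σ _ => ?_, fun T V _ _ _ _ hTV => FLamSet_Kset_injective.ne hTV, ?_⟩
  · simpa only [esubst, esubst_pTow] using relSat_hook_phiTow hkn (σ 0)
  · have himage : {L : Set EFor | ∃ T : Set ℕ, T.Nonempty ∧ 0 ∉ T ∧ L = FLamSet (Kset T)} =
        (fun T => FLamSet (Kset T)) '' {T | T.Nonempty ∧ 0 ∉ T} := by
      ext L
      simp [and_assoc, eq_comm]
    rw [himage, mk_image_eq FLamSet_Kset_injective, mk_setOf_nonempty_and_zero_not_mem]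
end

section
/- For any Epstein relation R, if R validates every substitution instance of α := p → (q ↪ p), then R ⊨ p ↪ p (i.e. (p,p) ∈ R). -/
/-- α := p → (q ↪ p). -/
def alphaF : EFor := .imp (.var 0) (.hook (.var 1) (.var 0))

theorem relSat_hook_iff {R : Set (EFor × EFor)} {φ ψ : EFor} :
    relSat R (.hook φ ψ) ↔ (φ, ψ) ∈ R ∧ relSat R (.imp φ ψ) :=
  ⟨fun h => ⟨(h fun _ => True).2, fun v => (h v).1⟩, fun ⟨hR, h⟩ v => ⟨h v, hR⟩⟩

theorem relSat_hook_self_iff {R : Set (EFor × EFor)} {φ : EFor} :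
    relSat R (.hook φ φ) ↔ (φ, φ) ∈ R :=
  relSat_hook_iff.trans (and_iff_left fun _ => id)

theorem mem_of_relSat_imp_hook {R : Set (EFor × EFor)} {φ ψ χ : EFor}
    (h : relSat R (.imp φ (.hook ψ χ))) {v : ℕ → Prop} (hv : sat ⟨v, R⟩ φ) : (ψ, χ) ∈ R :=
  (h v hv).2

theorem esubst_const_alphaF (φ : EFor) :
    esubst (fun _ => φ) alphaF = .imp φ (.hook φ φ) :=
  rfl

/-- if R validates all substitution instances of α then R ⊨ p ↪ p. -/
theorem stmt10 (R : Set (EFor × EFor))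
    (h : ∀ σ : ℕ → EFor, relSat R (esubst σ alphaF)) :
    relSat R (.hook (.var 0) (.var 0)) := by
  have hα : relSat R (.imp (.var 0) (.hook (.var 0) (.var 0))) := by
    simpa only [esubst_const_alphaF] using h fun _ => .var 0
  exact relSat_hook_self_iff.mpr (mem_of_relSat_imp_hook hα (v := fun _ => True) trivial)
end

section
/- The logic Fα, the closure of F ∪ {p → (q ↪ p)} under uniform substitution and modus ponens, is Epstein-incomplete: there is no set X of Epstein relations such that Fα = {φ : ∀R ∈ X, R ⊨ φ}. -/
def evalF (v : ℕ → Prop) : EFor → Prop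
  | .var n => v n
  | .neg φ => ¬ evalF v φ
  | .or φ ψ => evalF v φ ∨ evalF v ψ
  | .and φ ψ => evalF v φ ∧ evalF v ψ
  | .imp φ ψ => evalF v φ → evalF v ψ
  | .iff φ ψ => (evalF v φ ↔ evalF v ψ)
  | .tri φ ψ => evalF v φ ∧ evalF v ψ
  | .hook _ ψ => evalF v ψ

theorem evalF_subst (v : ℕ → Prop) (σ : ℕ → EFor) (φ : EFor) :
    evalF v (esubst σ φ) ↔ evalF (fun n => evalF v (σ n)) φ := by
  induction φ with
  | var n => simp [esubst, evalF]
  | neg φ ih => simp [esubst, evalF, ih]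
  | or φ ψ ih1 ih2 => simp [esubst, evalF, ih1, ih2]
  | and φ ψ ih1 ih2 => simp [esubst, evalF, ih1, ih2]
  | imp φ ψ ih1 ih2 => simp [esubst, evalF, ih1, ih2]
  | iff φ ψ ih1 ih2 => simp [esubst, evalF, ih1, ih2]
  | tri φ ψ ih1 ih2 => simp [esubst, evalF, ih1, ih2]
  | hook φ ψ ih1 ih2 => simp [esubst, evalF, ih1, ih2]

theorem evalF_sound {φ : EFor} (h : FLam {alphaF} φ) (v : ℕ → Prop) :
    evalF v φ := by
  induction h generalizing v with
  | taut ht =>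
      exact ht (evalF v) ⟨fun _ => Iff.rfl, fun _ _ => Iff.rfl, fun _ _ => Iff.rfl,
        fun _ _ => Iff.rfl, fun _ _ => Iff.rfl⟩
  | ax1 => simp only [evalF]; tauto
  | ax2 => simp only [evalF]; tauto
  | extra hm =>
      rcases hm with rfl
      simp [alphaF, evalF]
  | subst σ _ ih => exact (evalF_subst v σ _).mpr (ih _)
  | mp _ _ ih1 ih2 => exact ih1 v (ih2 v)

/-- Fα is Epstein-incomplete. -/
theorem stmt12 :
    ¬ ∃ X : Set (Set (EFor × EFor)),
        FLamSet {alphaF} = {φ | ∀ R ∈ X, relSat R φ} := by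
  rintro ⟨X, hEq⟩
  set χ : EFor := .imp (.imp (.var 1) (.var 0)) (.hook (.var 1) (.var 0)) with hχ
  have hαmem : alphaF ∈ FLamSet {alphaF} := FLam.extra rfl
  have hα : ∀ R ∈ X, relSat R alphaF := by
    rw [hEq] at hαmem; exact hαmem
  have hχmem : χ ∈ {φ | ∀ R ∈ X, relSat R φ} := by
    intro R hR v
    have hpair : ((EFor.var 1, EFor.var 0) : EFor × EFor) ∈ R := by
      have := hα R hR (fun _ => True)
      simp [alphaF, sat] at this
      exact this
    intro h
    exact ⟨h, hpair⟩
  rw [← hEq] at hχmem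
  have := evalF_sound hχmem (fun _ => False)
  simp [hχ, evalF] at this
end

section
/- The set R^s of all symmetric Epstein relations is undefinable: there is no set of formulas Γ such that for every relation R ⊆ FOR², (R ⊨ Γ iff R is symmetric). -/
def R' : Set (EFor × EFor) := Set.univ \ {(etop, ebot)}

lemma sat_etop (M : EModel) : sat M etop := by
  by_cases h : M.v 0
  · exact Or.inl h
  · exact Or.inr h

lemma not_sat_ebot (M : EModel) : ¬ sat M ebot := fun h => h (sat_etop M)

lemma agree (v : ℕ → Prop) (φ : EFor) :
    sat ⟨v, Set.univ⟩ φ ↔ sat ⟨v, R'⟩ φ := by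
  induction φ with
  | var n => simp [sat]
  | neg φ ih => simp [sat, ih]
  | or φ ψ ih1 ih2 => simp [sat, ih1, ih2]
  | and φ ψ ih1 ih2 => simp [sat, ih1, ih2]
  | imp φ ψ ih1 ih2 => simp [sat, ih1, ih2]
  | iff φ ψ ih1 ih2 => simp [sat, ih1, ih2]
  | tri φ ψ ih1 ih2 =>
      by_cases h : (φ, ψ) = (etop, ebot)
      · obtain ⟨h1, h2⟩ := Prod.mk.injEq .. ▸ h
        subst h1; subst h2
        simp only [sat]; tauto
      · simp [sat, ih1, ih2, R', h]
  | hook φ ψ ih1 ih2 =>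
      by_cases h : (φ, ψ) = (etop, ebot)
      · obtain ⟨h1, h2⟩ := Prod.mk.injEq .. ▸ h
        subst h1; subst h2
        simp only [sat]; have := sat_etop ⟨v, Set.univ⟩; have := not_sat_ebot ⟨v, Set.univ⟩; tauto
      · simp [sat, ih1, ih2, R', h]

lemma etop_ne_ebot : etop ≠ ebot := by simp [etop, ebot]

/-- the set of symmetric Epstein relations is undefinable. -/
theorem stmt14 :
    ¬ ∃ Γ : Set EFor, ∀ R : Set (EFor × EFor),
        (∀ γ ∈ Γ, relSat R γ) ↔ (∀ φ ψ : EFor, (φ, ψ) ∈ R → (ψ, φ) ∈ R) := by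
  rintro ⟨Γ, hΓ⟩
  have huniv : ∀ γ ∈ Γ, relSat Set.univ γ :=
    (hΓ Set.univ).mpr (fun _ _ _ => Set.mem_univ _)
  have hR' : ∀ γ ∈ Γ, relSat R' γ := by
    intro γ hγ v
    exact (agree v γ).mp (huniv γ hγ v)
  have hsym := (hΓ R').mp hR'
  have hmem : (ebot, etop) ∈ R' := by
    constructor
    · exact Set.mem_univ _
    · simp only [Set.mem_singleton_iff, Prod.mk.injEq, not_and]
      intro h; exact absurd h.symm etop_ne_ebot
  have := hsym _ _ hmem
  exact this.2 rfl
end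

section
/- The set R^n of all Epstein relations satisfying the condition (¬φ,ψ) ∈ R ⟹ (φ,ψ) ∈ R is undefinable by any set of Epstein formulas. -/
lemma neg_ebot_ebot_mem_Omega (M : EModel) : (EFor.neg ebot, ebot) ∈ Omega M :=
  fun h => not_sat_ebot M (h (not_sat_ebot M))

/-- A pair whose implication is false can never witness `↪` or `△`, so adding it to the relation
changes nothing. -/
lemma sat_insert_iff_of_mem_Omega {v : ℕ → Prop} {R : Set (EFor × EFor)} {p : EFor × EFor}
    (hp : p ∈ Omega ⟨v, R⟩) (φ : EFor) : sat ⟨v, insert p R⟩ φ ↔ sat ⟨v, R⟩ φ := by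
  induction φ with
  | var n => rfl
  | neg φ ih => exact not_congr ih
  | or φ ψ ih₁ ih₂ => exact or_congr ih₁ ih₂
  | and φ ψ ih₁ ih₂ => exact and_congr ih₁ ih₂
  | imp φ ψ ih₁ ih₂ => exact imp_congr ih₁ ih₂
  | iff φ ψ ih₁ ih₂ => exact iff_congr ih₁ ih₂
  | tri φ ψ ih₁ ih₂ =>
    simp only [sat, Set.mem_insert_iff, ih₁, ih₂]
    refine and_congr_right fun hφψ => or_iff_right ?_
    rintro rfl
    exact hp fun _ => hφψ.2
  | hook φ ψ ih₁ ih₂ =>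
    simp only [sat, Set.mem_insert_iff, ih₁, ih₂]
    refine and_congr_right fun himp => or_iff_right ?_
    rintro rfl
    exact hp himp

lemma relSat_insert_iff_of_mem_Omega {R : Set (EFor × EFor)} {p : EFor × EFor}
    (hp : ∀ v, p ∈ Omega ⟨v, R⟩) (φ : EFor) : relSat (insert p R) φ ↔ relSat R φ :=
  forall_congr' fun v => sat_insert_iff_of_mem_Omega (hp v) φ

/-- the set of relations with (¬φ,ψ) ∈ R ⟹ (φ,ψ) ∈ R is undefinable. -/
theorem stmt15 :
    ¬ ∃ Γ : Set EFor, ∀ R : Set (EFor × EFor),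
        (∀ γ ∈ Γ, relSat R γ) ↔ (∀ φ ψ : EFor, (EFor.neg φ, ψ) ∈ R → (φ, ψ) ∈ R) := by
  rintro ⟨Γ, hΓ⟩
  have hΓ_empty : ∀ γ ∈ Γ, relSat ∅ γ := (hΓ ∅).2 fun _ _ h => h.elim
  have hΓ_insert : ∀ γ ∈ Γ, relSat (insert (.neg ebot, ebot) ∅) γ := fun γ hγ =>
    (relSat_insert_iff_of_mem_Omega (fun _ => neg_ebot_ebot_mem_Omega _) γ).2 (hΓ_empty γ hγ)
  have hmem := (hΓ _).1 hΓ_insert ebot ebot (Set.mem_insert _ _)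
  simp [ebot, etop] at hmem
end
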